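/- arXiv:1108.4623 — 4 statements merged into one kernel-verified Lean document; each statement's English description precedes it below -/
import Mathlib

section
/- Let d ≥ 2, K ≥ 1, M ≥ 0, and let {P_m} be a sequence of polynomials P_m(z) = a_{d_m,m} z^{d_m} + ... + a_{0,m} with 2 ≤ d_m ≤ d, 1/K ≤ |a_{d_m,m}| ≤ K, and |a_{n,m}| ≤ M for n < d_m. Then there exists R > 0, depending only on d, K, M, such that for every m ≥ 0 and every z with |z| > R, the iterates Q_{m,n}(z) = P_n ∘ ... ∘ P_{m+1}(z) satisfy |Q_{m,n}(z)| → ∞ as n → ∞. -/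
open Filter Polynomial

/-!
Once `|z| > R := K (d M + 2)`, the leading term of each `P_m` dominates the lower-order ones,
`|P_m(z)| ≥ |z|^{d_m - 1} (|z| / K - d M) ≥ 2 |z|`, so the region `|z| > R` is mapped into itself
and every orbit starting there grows at least like `2^n |z|`.
-/

section NormedField

variable {𝕜 : Type*} [NormedField 𝕜]

theorem Polynomial.norm_eval_sub_leading_le (p : 𝕜[X]) {M : ℝ} (hM : 0 ≤ M)
    (hcoeff : ∀ i < p.natDegree, ‖p.coeff i‖ ≤ M) {w : 𝕜} (hw : 1 ≤ ‖w‖) :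
    ‖p.eval w - p.leadingCoeff * w ^ p.natDegree‖ ≤
      p.natDegree * M * ‖w‖ ^ (p.natDegree - 1) := by
  rw [eval_eq_sum_range, Finset.sum_range_succ, leadingCoeff, add_sub_cancel_right]
  calc ‖∑ i ∈ Finset.range p.natDegree, p.coeff i * w ^ i‖
      ≤ ∑ i ∈ Finset.range p.natDegree, ‖p.coeff i * w ^ i‖ := norm_sum_le _ _
    _ ≤ ∑ _i ∈ Finset.range p.natDegree, M * ‖w‖ ^ (p.natDegree - 1) := by
        refine Finset.sum_le_sum fun i hi => ?_
        have hi : i < p.natDegree := Finset.mem_range.mp hi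
        rw [norm_mul, norm_pow]
        exact mul_le_mul (hcoeff i hi) (pow_le_pow_right₀ hw (by omega)) (by positivity) hM
    _ = p.natDegree * M * ‖w‖ ^ (p.natDegree - 1) := by
        rw [Finset.sum_const, Finset.card_range, nsmul_eq_mul, mul_assoc]

theorem Polynomial.two_mul_norm_le_norm_eval (p : 𝕜[X]) (hdeg : 2 ≤ p.natDegree) {M : ℝ}
    (hM : 0 ≤ M) (hcoeff : ∀ i < p.natDegree, ‖p.coeff i‖ ≤ M) {w : 𝕜} (hw : 1 ≤ ‖w‖)
    (hlead : p.natDegree * M + 2 ≤ ‖p.leadingCoeff‖ * ‖w‖) :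
    2 * ‖w‖ ≤ ‖p.eval w‖ := by
  set D := p.natDegree
  have hsplit : ‖w‖ ^ D = ‖w‖ ^ (D - 1) * ‖w‖ := by rw [← pow_succ, Nat.sub_add_cancel (by omega)]
  have hpow : ‖w‖ ≤ ‖w‖ ^ (D - 1) := le_self_pow₀ hw (by omega)
  have hlower := p.norm_eval_sub_leading_le hM hcoeff hw
  have htri := norm_sub_norm_le (p.leadingCoeff * w ^ D) (p.leadingCoeff * w ^ D - p.eval w)
  rw [sub_sub_cancel, norm_sub_rev, norm_mul, norm_pow, hsplit] at htri
  calc 2 * ‖w‖ ≤ ‖w‖ ^ (D - 1) * 2 := by linarith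
    _ ≤ ‖w‖ ^ (D - 1) * (‖p.leadingCoeff‖ * ‖w‖ - D * M) := by gcongr; linarith
    _ ≤ ‖p.eval w‖ := by linarith

end NormedField

theorem two_mul_norm_le_norm_eval_of_bounds {d : ℕ} {K M : ℝ} (hK : 1 ≤ K) (hM : 0 ≤ M)
    (p : ℂ[X]) (hdeg : 2 ≤ p.natDegree ∧ p.natDegree ≤ d) (hlead : 1 / K ≤ ‖p.leadingCoeff‖)
    (hcoeff : ∀ i < p.natDegree, ‖p.coeff i‖ ≤ M) {w : ℂ} (hw : K * (d * M + 2) < ‖w‖) :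
    2 * ‖w‖ ≤ ‖p.eval w‖ := by
  have hK0 : 0 < K := by linarith
  have hdM : (p.natDegree : ℝ) * M ≤ d * M := by gcongr; exact_mod_cast hdeg.2
  have hw1 : 1 ≤ ‖w‖ := by nlinarith [mul_nonneg (Nat.cast_nonneg (α := ℝ) d) hM]
  refine p.two_mul_norm_le_norm_eval hdeg.1 hM hcoeff hw1 ?_
  calc (p.natDegree : ℝ) * M + 2 ≤ d * M + 2 := by linarith
    _ ≤ 1 / K * ‖w‖ := by rw [one_div_mul_eq_div, le_div_iff₀ hK0]; linarith
    _ ≤ ‖p.leadingCoeff‖ * ‖w‖ := by gcongr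

theorem tendsto_atTop_of_two_mul_le_succ {u : ℕ → ℝ} {R : ℝ} (hR : 0 ≤ R) (h0 : R < u 0)
    (hstep : ∀ n, R < u n → 2 * u n ≤ u (n + 1)) : Tendsto u atTop atTop := by
  have hgrowth : ∀ n, 2 ^ n * u 0 ≤ u n := by
    intro n
    induction n with
    | zero => simp
    | succ n ih =>
      have hRn : R < u n := by nlinarith [one_le_pow₀ (n := n) (one_le_two : (1 : ℝ) ≤ 2)]
      calc 2 ^ (n + 1) * u 0 = 2 * (2 ^ n * u 0) := by ring
        _ ≤ 2 * u n := by linarith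
        _ ≤ u (n + 1) := hstep n hRn
  refine tendsto_atTop_mono hgrowth ?_
  exact (tendsto_pow_atTop_atTop_of_one_lt one_lt_two).atTop_mul_const (by linarith)

theorem escape_radius_exists_general (d : ℕ) (K M : ℝ) (hK : 1 ≤ K) (hM : 0 ≤ M) :
    ∃ R : ℝ, 0 < R ∧
      ∀ (P : ℕ → Polynomial ℂ) (dm : ℕ → ℕ),
        (∀ m, (P m).natDegree = dm m) →
        (∀ m, 2 ≤ dm m ∧ dm m ≤ d) →
        (∀ m, 1 / K ≤ ‖(P m).leadingCoeff‖ ∧ ‖(P m).leadingCoeff‖ ≤ K) →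
        (∀ m n, n < dm m → ‖(P m).coeff n‖ ≤ M) →
        ∀ (Q : ℕ → ℕ → ℂ → ℂ),
          (∀ m z, Q m m z = z) →
          (∀ m n z, Q m (n + 1) z = (P (n + 1)).eval (Q m n z)) →
          ∀ m (z : ℂ), R < ‖z‖ →
            Tendsto (fun n => ‖Q m n z‖) atTop atTop := by
  refine ⟨K * (d * M + 2), by positivity, ?_⟩
  intro P dm hdeg hdm hlead hcoeff Q hQ0 hQrec m z hz
  have hescape : ∀ n (w : ℂ), K * (d * M + 2) < ‖w‖ → 2 * ‖w‖ ≤ ‖(P n).eval w‖ :=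
    fun n _ hw => two_mul_norm_le_norm_eval_of_bounds hK hM (P n) (hdeg n ▸ hdm n) (hlead n).1
      (fun i hi => hcoeff n i (hdeg n ▸ hi)) hw
  rw [← tendsto_add_atTop_iff_nat m]
  refine tendsto_atTop_of_two_mul_le_succ (R := K * (d * M + 2)) (by positivity)
    (by simpa [hQ0] using hz) fun k hk => ?_
  rw [Nat.add_right_comm, hQrec]
  exact hescape _ _ hk

/-- existence of an escape radius depending only on the bounds d, K, M. -/
theorem escape_radius_exists (d : ℕ) (K M : ℝ) (hd : 2 ≤ d) (hK : 1 ≤ K) (hM : 0 ≤ M) :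
    ∃ R : ℝ, 0 < R ∧
      ∀ (P : ℕ → Polynomial ℂ) (dm : ℕ → ℕ),
        (∀ m, (P m).natDegree = dm m) →
        (∀ m, 2 ≤ dm m ∧ dm m ≤ d) →
        (∀ m, 1 / K ≤ ‖(P m).leadingCoeff‖ ∧ ‖(P m).leadingCoeff‖ ≤ K) →
        (∀ m n, n < dm m → ‖(P m).coeff n‖ ≤ M) →
        ∀ (Q : ℕ → ℕ → ℂ → ℂ),
          (∀ m z, Q m m z = z) →
          (∀ m n z, Q m (n + 1) z = (P (n + 1)).eval (Q m n z)) →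
          ∀ m (z : ℂ), R < ‖z‖ →
            Tendsto (fun n => ‖Q m n z‖) atTop atTop :=
  escape_radius_exists_general d K M hK hM
end

section
/- Let {P_m} be a sequence of monic polynomials with degrees d_m ∈ [2, d] and non-leading coefficients bounded by M. Let R_0 be such that for all R ≥ R_0 and 2 ≤ d' ≤ d, R^{d'} ≥ 2M ∑_{i=0}^{d'-1} R^i, and assume R_0^2/2 ≥ R_0. Then for every m ≤ n and every z with |z| = R ≥ R_0, writing D_{m,n} = ∏_{i=m+1}^n d_i, one has (1/2)^{1 + ∑_{i=m+1}^n D_{i,n}} R^{D_{m,n}} ≤ |Q_{m,n}(z)| ≤ (3/2)^{1 + ∑_{i=m+1}^n D_{i,n}} R^{D_{m,n}}. -/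
open Polynomial Finset

/-! On `‖w‖ ≥ R₀` the non-leading terms of `P_m w` have total size at most `½ ‖w‖ ^ d_m`, so
`‖P_m w‖` lies between `½ ‖w‖ ^ d_m` and `3/2 ‖w‖ ^ d_m`; since `R₀ ≥ 2` and `d_m ≥ 2`, this also
gives `‖P_m w‖ ≥ ‖w‖`, so the orbit never leaves `‖w‖ ≥ R₀`. Iterating the two-sided estimate,
the constants accumulate as `c ^ S_{m,n}` with `S_{m,n+1} = 1 + S_{m,n} d_{n+1}`, which is solved by
`S_{m,n} = ∑_{i=m+1}^n D_{i,n}`. -/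

namespace Polynomial.Monic

variable {𝕜 : Type*} [NormedDivisionRing 𝕜] {p : 𝕜[X]} {M : ℝ} {w : 𝕜}

theorem norm_eval_sub_pow_natDegree_le (hp : p.Monic)
    (hM : ∀ i < p.natDegree, ‖p.coeff i‖ ≤ M) (w : 𝕜) :
    ‖p.eval w - w ^ p.natDegree‖ ≤ M * ∑ i ∈ range p.natDegree, ‖w‖ ^ i := by
  have hsplit : p.eval w - w ^ p.natDegree = ∑ i ∈ range p.natDegree, p.coeff i * w ^ i := by
    rw [eval_eq_sum_range, sum_range_succ, hp.coeff_natDegree, one_mul, add_sub_cancel_right]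
  rw [hsplit, mul_sum]
  refine (norm_sum_le _ _).trans (sum_le_sum fun i hi => ?_)
  rw [norm_mul, norm_pow]
  exact mul_le_mul_of_nonneg_right (hM i (mem_range.mp hi)) (by positivity)

theorem half_mul_norm_pow_le_norm_eval (hp : p.Monic)
    (hM : ∀ i < p.natDegree, ‖p.coeff i‖ ≤ M)
    (hdom : 2 * M * ∑ i ∈ range p.natDegree, ‖w‖ ^ i ≤ ‖w‖ ^ p.natDegree) :
    1 / 2 * ‖w‖ ^ p.natDegree ≤ ‖p.eval w‖ := by
  have herr := hp.norm_eval_sub_pow_natDegree_le hM w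
  have htri := norm_sub_norm_le (w ^ p.natDegree) (p.eval w)
  rw [norm_pow, norm_sub_rev] at htri
  linarith

theorem norm_eval_le_three_halves_mul_norm_pow (hp : p.Monic)
    (hM : ∀ i < p.natDegree, ‖p.coeff i‖ ≤ M)
    (hdom : 2 * M * ∑ i ∈ range p.natDegree, ‖w‖ ^ i ≤ ‖w‖ ^ p.natDegree) :
    ‖p.eval w‖ ≤ 3 / 2 * ‖w‖ ^ p.natDegree := by
  have herr := hp.norm_eval_sub_pow_natDegree_le hM w
  have htri := norm_le_norm_add_norm_sub' (p.eval w) (w ^ p.natDegree)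
  rw [norm_pow] at htri
  linarith

theorem norm_le_norm_eval (hp : p.Monic) (hM : ∀ i < p.natDegree, ‖p.coeff i‖ ≤ M)
    (hdom : 2 * M * ∑ i ∈ range p.natDegree, ‖w‖ ^ i ≤ ‖w‖ ^ p.natDegree)
    (hdeg : 2 ≤ p.natDegree) (hw : 2 ≤ ‖w‖) :
    ‖w‖ ≤ ‖p.eval w‖ := by
  calc ‖w‖ ≤ 1 / 2 * ‖w‖ ^ 2 := by nlinarith
    _ ≤ 1 / 2 * ‖w‖ ^ p.natDegree := by gcongr; linarith
    _ ≤ ‖p.eval w‖ := hp.half_mul_norm_pow_le_norm_eval hM hdom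

end Polynomial.Monic

/-- `degProd k m n` is the paper's `D_{m,n}`, the degree of `Q_{m,n}` when `deg P_i = k i`. -/
def degProd (k : ℕ → ℕ) (m n : ℕ) : ℕ := ∏ i ∈ Icc (m + 1) n, k i

def degProdSum (k : ℕ → ℕ) (m n : ℕ) : ℕ := ∑ i ∈ Icc (m + 1) n, degProd k i n

section DegreeBookkeeping

variable (k : ℕ → ℕ) {m n : ℕ}

@[simp]
theorem degProd_self (m : ℕ) : degProd k m m = 1 := by simp [degProd]

@[simp]
theorem degProdSum_self (m : ℕ) : degProdSum k m m = 0 := by simp [degProdSum]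

theorem degProd_succ (h : m ≤ n) : degProd k m (n + 1) = degProd k m n * k (n + 1) :=
  prod_Icc_succ_top (by omega) k

theorem degProdSum_succ (h : m ≤ n) :
    degProdSum k m (n + 1) = 1 + degProdSum k m n * k (n + 1) := by
  have hlast : ∀ i ∈ Icc (m + 1) n, degProd k i (n + 1) = degProd k i n * k (n + 1) :=
    fun i hi => degProd_succ k (mem_Icc.mp hi).2
  rw [degProdSum, sum_Icc_succ_top (by omega), sum_congr rfl hlast, ← sum_mul, degProd_self,
    degProdSum, add_comm]

theorem mul_pow_degProdSum_mul_pow_degProd {α : Type*} [CommMonoid α] (c R : α) (h : m ≤ n) :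
    c * (c ^ degProdSum k m n * R ^ degProd k m n) ^ k (n + 1) =
      c ^ degProdSum k m (n + 1) * R ^ degProd k m (n + 1) := by
  rw [degProdSum_succ k h, degProd_succ k h, mul_pow, ← pow_mul, ← pow_mul, pow_add, pow_one,
    mul_assoc]

end DegreeBookkeeping

section Iteration

variable {α : Type*} [CommSemiring α] [PartialOrder α] [IsOrderedRing α]
  {k : ℕ → ℕ} {x : ℕ → α} {c R : α} {m n : ℕ}

theorem pow_degProdSum_mul_pow_degProd_le (hc : 0 ≤ c) (hR : 0 ≤ R) (hxm : R ≤ x m)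
    (hstep : ∀ n, m ≤ n → c * x n ^ k (n + 1) ≤ x (n + 1)) (hmn : m ≤ n) :
    c ^ degProdSum k m n * R ^ degProd k m n ≤ x n := by
  induction n, hmn using Nat.le_induction with
  | base => simpa using hxm
  | succ n hmn ih =>
    rw [← mul_pow_degProdSum_mul_pow_degProd k c R hmn]
    exact (mul_le_mul_of_nonneg_left (pow_le_pow_left₀ (by positivity) ih _) hc).trans
      (hstep n hmn)

theorem le_pow_degProdSum_mul_pow_degProd (hc : 0 ≤ c) (hx : ∀ n, m ≤ n → 0 ≤ x n)
    (hxm : x m ≤ R) (hstep : ∀ n, m ≤ n → x (n + 1) ≤ c * x n ^ k (n + 1)) (hmn : m ≤ n) :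
    x n ≤ c ^ degProdSum k m n * R ^ degProd k m n := by
  induction n, hmn using Nat.le_induction with
  | base => simpa using hxm
  | succ n hmn ih =>
    rw [← mul_pow_degProdSum_mul_pow_degProd k c R hmn]
    exact (hstep n hmn).trans
      (mul_le_mul_of_nonneg_left (pow_le_pow_left₀ (hx n hmn) ih _) hc)

end Iteration

theorem composition_circle_estimate_general (d : ℕ) (M : ℝ)
    (P : ℕ → Polynomial ℂ) (dm : ℕ → ℕ)
    (hmonic : ∀ m, (P m).Monic) (hdeg : ∀ m, (P m).natDegree = dm m)
    (hdm : ∀ m, 2 ≤ dm m ∧ dm m ≤ d)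
    (hcoeff : ∀ m, ∀ i < dm m, ‖(P m).coeff i‖ ≤ M)
    (R₀ : ℝ) (hR₀ : 0 < R₀)
    (hR₀dom : ∀ R : ℝ, R₀ ≤ R → ∀ d' : ℕ, 2 ≤ d' → d' ≤ d →
      2 * M * ∑ i ∈ range d', R ^ i ≤ R ^ d')
    (hR₀sq : R₀ ≤ R₀ ^ 2 / 2)
    (Q : ℕ → ℕ → ℂ → ℂ)
    (hQ0 : ∀ m z, Q m m z = z)
    (hQs : ∀ m n z, Q m (n + 1) z = (P (n + 1)).eval (Q m n z))
    (D : ℕ → ℕ → ℕ) (hD : ∀ m n, D m n = ∏ i ∈ Finset.Icc (m + 1) n, dm i)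
    (m n : ℕ) (hmn : m ≤ n) (R : ℝ) (hR : R₀ ≤ R) (z : ℂ) (hz : ‖z‖ = R) :
    (1 / 2 : ℝ) ^ (1 + ∑ i ∈ Finset.Icc (m + 1) n, D i n) * R ^ D m n
      ≤ ‖Q m n z‖ ∧
    ‖Q m n z‖
      ≤ (3 / 2 : ℝ) ^ (1 + ∑ i ∈ Finset.Icc (m + 1) n, D i n) * R ^ D m n := by
  obtain rfl : dm = fun j => (P j).natDegree := funext fun j => (hdeg j).symm
  subst hz
  have h2R₀ : 2 ≤ R₀ := by nlinarith
  have hdom : ∀ j (w : ℂ), R₀ ≤ ‖w‖ →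
      2 * M * ∑ i ∈ range (P j).natDegree, ‖w‖ ^ i ≤ ‖w‖ ^ (P j).natDegree :=
    fun j w hw => hR₀dom _ hw _ (hdm j).1 (hdm j).2
  have hescape : ∀ n, m ≤ n → R₀ ≤ ‖Q m n z‖ := by
    intro n hmn
    induction n, hmn using Nat.le_induction with
    | base => rwa [hQ0]
    | succ n _ ih =>
      rw [hQs]
      exact ih.trans ((hmonic _).norm_le_norm_eval (hcoeff _) (hdom _ _ ih) (hdm _).1
        (h2R₀.trans ih))
  have hstep_lower : ∀ n, m ≤ n →
      1 / 2 * ‖Q m n z‖ ^ (P (n + 1)).natDegree ≤ ‖Q m (n + 1) z‖ := fun n hn => by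
    rw [hQs]
    exact (hmonic _).half_mul_norm_pow_le_norm_eval (hcoeff _) (hdom _ _ (hescape n hn))
  have hstep_upper : ∀ n, m ≤ n →
      ‖Q m (n + 1) z‖ ≤ 3 / 2 * ‖Q m n z‖ ^ (P (n + 1)).natDegree := fun n hn => by
    rw [hQs]
    exact (hmonic _).norm_eval_le_three_halves_mul_norm_pow (hcoeff _) (hdom _ _ (hescape n hn))
  have hlower := pow_degProdSum_mul_pow_degProd_le (k := fun j => (P j).natDegree)
    (x := fun n => ‖Q m n z‖) (c := 1 / 2)
    (by norm_num) (norm_nonneg z) (by rw [hQ0]) hstep_lower hmn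
  have hupper := le_pow_degProdSum_mul_pow_degProd (k := fun j => (P j).natDegree)
    (x := fun n => ‖Q m n z‖) (c := 3 / 2)
    (by norm_num) (fun n _ => norm_nonneg _) (by rw [hQ0]) hstep_upper hmn
  obtain rfl : D = degProd fun j => (P j).natDegree := funext₂ hD
  refine ⟨le_trans ?_ hlower, hupper.trans ?_⟩
  · exact mul_le_mul_of_nonneg_right
      (pow_le_pow_of_le_one (by norm_num) (by norm_num) (Nat.le_add_left _ 1)) (by positivity)
  · exact mul_le_mul_of_nonneg_right
      (pow_le_pow_right₀ (by norm_num) (Nat.le_add_left _ 1)) (by positivity)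

/-- growth estimates for compositions of a bounded monic polynomial sequence. -/
theorem composition_circle_estimate (d : ℕ) (M : ℝ) (hd : 2 ≤ d) (hM : 0 ≤ M)
    (P : ℕ → Polynomial ℂ) (dm : ℕ → ℕ)
    (hmonic : ∀ m, (P m).Monic) (hdeg : ∀ m, (P m).natDegree = dm m)
    (hdm : ∀ m, 2 ≤ dm m ∧ dm m ≤ d)
    (hcoeff : ∀ m, ∀ i < dm m, ‖(P m).coeff i‖ ≤ M)
    (R₀ : ℝ) (hR₀ : 0 < R₀)
    (hR₀dom : ∀ R : ℝ, R₀ ≤ R → ∀ d' : ℕ, 2 ≤ d' → d' ≤ d →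
      2 * M * ∑ i ∈ range d', R ^ i ≤ R ^ d')
    (hR₀sq : R₀ ≤ R₀ ^ 2 / 2)
    (Q : ℕ → ℕ → ℂ → ℂ)
    (hQ0 : ∀ m z, Q m m z = z)
    (hQs : ∀ m n z, Q m (n + 1) z = (P (n + 1)).eval (Q m n z))
    (D : ℕ → ℕ → ℕ) (hD : ∀ m n, D m n = ∏ i ∈ Finset.Icc (m + 1) n, dm i)
    (m n : ℕ) (hmn : m ≤ n) (R : ℝ) (hR : R₀ ≤ R) (z : ℂ) (hz : ‖z‖ = R) :
    (1 / 2 : ℝ) ^ (1 + ∑ i ∈ Finset.Icc (m + 1) n, D i n) * R ^ D m n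
      ≤ ‖Q m n z‖ ∧
    ‖Q m n z‖
      ≤ (3 / 2 : ℝ) ^ (1 + ∑ i ∈ Finset.Icc (m + 1) n, D i n) * R ^ D m n :=
  composition_circle_estimate_general d M P dm hmonic hdeg hdm hcoeff R₀ hR₀ hR₀dom hR₀sq Q hQ0 hQs
    D hD m n hmn R hR z hz
end

section
/- Let {P_m} be a bounded polynomial sequence (degrees d_m ∈ [2,d], leading coefficients with moduli in [1/K,K], other coefficients bounded by M). Then there exist constants A ≥ 1 and a sequence of linear maps χ_m(z) = α_m z with 1/A ≤ |α_m| ≤ A such that the conjugated sequence ˜P_m = χ_m ∘ P_m ∘ χ_{m-1}^{-1} consists of monic polynomials, and the ˜P_m form a bounded sequence. -/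
/-!
Write `a_m` for the leading coefficient of `P_m`. The polynomial `β' P_m(z / β)` has leading
coefficient `β' a_m / β ^ d_m`, so with `χ_m(z) = β_{m+1} z` monicity amounts to
`β_m ^ d_m = a_m β_{m+1}`. With `β = exp S` this becomes the linear recursion
`d_m S_m = log a_m + S_{m+1}`, solved by unrolling it into the series
`S_m = ∑ₖ log a_{m+k} / (d_m ⋯ d_{m+k})`. As `d_m ≥ 2` and `log a_m` is bounded, the series
converges geometrically and `S` is bounded, so `β` is bounded above and away from zero, and the
coefficients of the conjugates stay bounded.
-/

open Polynomial

section UnrolledRecursion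

variable {𝕜 : Type*} [NormedField 𝕜]

noncomputable def unrolledTerm (b e : ℕ → 𝕜) (n k : ℕ) : 𝕜 :=
  b (n + k) / ∏ j ∈ Finset.range (k + 1), e (n + j)

theorem mul_unrolledTerm_zero {b e : ℕ → 𝕜} {n : ℕ} (he : e n ≠ 0) :
    e n * unrolledTerm b e n 0 = b n := by
  simp [unrolledTerm, mul_div_cancel₀ _ he]

theorem mul_unrolledTerm_succ {b e : ℕ → 𝕜} {n : ℕ} (k : ℕ) (he : e n ≠ 0) :
    e n * unrolledTerm b e n (k + 1) = unrolledTerm b e (n + 1) k := by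
  have hprod : ∏ j ∈ Finset.range (k + 2), e (n + j)
      = e n * ∏ j ∈ Finset.range (k + 1), e (n + 1 + j) := by
    rw [Finset.prod_range_succ', mul_comm]
    simp only [add_zero, add_assoc, add_comm 1]
  rw [unrolledTerm, unrolledTerm, hprod, show n + (k + 1) = n + 1 + k by omega, mul_div_assoc',
    mul_div_mul_left _ _ he]

theorem norm_unrolledTerm_le {b e : ℕ → 𝕜} {B : ℝ} (hb : ∀ n, ‖b n‖ ≤ B)
    (he : ∀ n, 2 ≤ ‖e n‖) (n k : ℕ) : ‖unrolledTerm b e n k‖ ≤ B / 2 / 2 ^ k := by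
  have hprod : (2 : ℝ) ^ (k + 1) ≤ ‖∏ j ∈ Finset.range (k + 1), e (n + j)‖ := by
    simpa [norm_prod] using
      Finset.prod_le_prod (s := Finset.range (k + 1)) (f := fun _ => (2 : ℝ))
        (fun _ _ => zero_le_two) (fun j _ => he (n + j))
  rw [unrolledTerm, norm_div, div_div, ← pow_succ']
  exact div_le_div₀ ((norm_nonneg _).trans (hb 0)) (hb _) (by positivity) hprod

theorem exists_bounded_mul_eq_add_succ [CompleteSpace 𝕜] {b e : ℕ → 𝕜} {B : ℝ}
    (hb : ∀ n, ‖b n‖ ≤ B) (he : ∀ n, 2 ≤ ‖e n‖) :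
    ∃ S : ℕ → 𝕜, (∀ n, ‖S n‖ ≤ B) ∧ ∀ n, e n * S n = b n + S (n + 1) := by
  have he0 : ∀ n, e n ≠ 0 := fun n h => by simpa [h] using (he n).trans_lt' two_pos
  have hsum : ∀ n, Summable (unrolledTerm b e n) := fun n =>
    .of_norm_bounded (summable_geometric_two' B) (norm_unrolledTerm_le hb he n)
  refine ⟨fun n => ∑' k, unrolledTerm b e n k, fun n => ?_, fun n => ?_⟩
  · exact tsum_of_norm_bounded (hasSum_geometric_two' B) (norm_unrolledTerm_le hb he n)
  · rw [← tsum_mul_left, ((hsum n).mul_left (e n)).tsum_eq_zero_add, mul_unrolledTerm_zero (he0 n)]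
    simp only [mul_unrolledTerm_succ _ (he0 n)]

end UnrolledRecursion

theorem Complex.norm_log_le_log_add_pi {z : ℂ} {K : ℝ} (hK : 0 < K) (hlow : 1 / K ≤ ‖z‖)
    (hup : ‖z‖ ≤ K) : ‖Complex.log z‖ ≤ Real.log K + Real.pi := by
  have hz : 0 < ‖z‖ := (one_div_pos.2 hK).trans_le hlow
  have hre : |Real.log ‖z‖| ≤ Real.log K := by
    refine abs_le.2 ⟨?_, Real.log_le_log hz hup⟩
    simpa [Real.log_inv] using Real.log_le_log (one_div_pos.2 hK) hlow
  calc ‖Complex.log z‖ ≤ |(Complex.log z).re| + |(Complex.log z).im| :=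
        Complex.norm_le_abs_re_add_abs_im _
    _ ≤ Real.log K + Real.pi := by
        rw [Complex.log_re, Complex.log_im]
        exact add_le_add hre (Complex.abs_arg_le_pi z)

theorem Complex.norm_exp_bounds_of_norm_le {z : ℂ} {B : ℝ} (hz : ‖z‖ ≤ B) :
    1 / Real.exp B ≤ ‖Complex.exp z‖ ∧ ‖Complex.exp z‖ ≤ Real.exp B := by
  have hre := abs_le.1 ((Complex.abs_re_le_norm z).trans hz)
  rw [Complex.norm_exp, one_div, ← Real.exp_neg]
  exact ⟨Real.exp_le_exp.2 hre.1, Real.exp_le_exp.2 hre.2⟩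

theorem exists_bounded_pow_eq_mul_succ {a : ℕ → ℂ} {e : ℕ → ℕ} {K : ℝ} (hK : 1 ≤ K)
    (ha : ∀ n, 1 / K ≤ ‖a n‖ ∧ ‖a n‖ ≤ K) (he : ∀ n, 2 ≤ e n) :
    ∃ (A : ℝ) (β : ℕ → ℂ), 1 ≤ A ∧ (∀ n, 1 / A ≤ ‖β n‖ ∧ ‖β n‖ ≤ A) ∧
      ∀ n, β n ^ e n = a n * β (n + 1) := by
  have hK0 : 0 < K := one_pos.trans_le hK
  have ha0 : ∀ n, a n ≠ 0 := fun n h => by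
    have := (one_div_pos.2 hK0).trans_le (ha n).1
    simp [h] at this
  obtain ⟨S, hSB, hS⟩ := exists_bounded_mul_eq_add_succ (b := fun n => Complex.log (a n))
    (e := fun n => (e n : ℂ)) (B := Real.log K + Real.pi)
    (fun n => Complex.norm_log_le_log_add_pi hK0 (ha n).1 (ha n).2)
    (fun n => by simpa using he n)
  refine ⟨Real.exp (Real.log K + Real.pi), fun n => Complex.exp (S n),
    Real.one_le_exp (add_nonneg (Real.log_nonneg hK) Real.pi_pos.le),
    fun n => Complex.norm_exp_bounds_of_norm_le (hSB n), fun n => ?_⟩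
  rw [← Complex.exp_nat_mul, hS n, Complex.exp_add, Complex.exp_log (ha0 n)]

section Rescaling

variable {F : Type*} [Field F] (p : F[X]) {γ c : F}

theorem natDegree_C_mul_comp_C_mul_X (hγ : γ ≠ 0) (hc : c ≠ 0) :
    (C γ * p.comp (C c * X)).natDegree = p.natDegree := by
  rw [natDegree_C_mul hγ, natDegree_comp, natDegree_C_mul_X c hc, mul_one]

theorem leadingCoeff_C_mul_comp_C_mul_X (hγ : γ ≠ 0) (hc : c ≠ 0) :
    (C γ * p.comp (C c * X)).leadingCoeff = γ * p.leadingCoeff * c ^ p.natDegree := by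
  rw [leadingCoeff, natDegree_C_mul_comp_C_mul_X p hγ hc, coeff_C_mul, comp_C_mul_X_coeff,
    mul_assoc, leadingCoeff]

end Rescaling

theorem norm_coeff_C_mul_comp_C_mul_X_le {𝕜 : Type*} [NormedField 𝕜] {p : 𝕜[X]} {γ c : 𝕜}
    {A M : ℝ} {n d : ℕ} (hA : 1 ≤ A) (hM : 0 ≤ M) (hγ : ‖γ‖ ≤ A) (hc : ‖c‖ ≤ A) (hnd : n ≤ d)
    (hp : ‖p.coeff n‖ ≤ M) : ‖(C γ * p.comp (C c * X)).coeff n‖ ≤ A ^ (d + 1) * M := by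
  rw [coeff_C_mul, comp_C_mul_X_coeff, norm_mul, norm_mul, norm_pow]
  calc ‖γ‖ * (‖p.coeff n‖ * ‖c‖ ^ n) ≤ A * (M * A ^ d) := by
        gcongr
        exact (pow_le_pow_left₀ (norm_nonneg c) hc n).trans (pow_le_pow_right₀ hA hnd)
    _ = A ^ (d + 1) * M := by ring

theorem conjugate_to_monic_general (d : ℕ) (K M : ℝ) (hK : 1 ≤ K) (hM : 0 ≤ M)
    (P : ℕ → Polynomial ℂ) (dm : ℕ → ℕ)
    (hdeg : ∀ m, (P m).natDegree = dm m)
    (hdm : ∀ m, 2 ≤ dm m ∧ dm m ≤ d)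
    (hlead : ∀ m, 1 / K ≤ ‖(P m).leadingCoeff‖ ∧
      ‖(P m).leadingCoeff‖ ≤ K)
    (hcoeff : ∀ m, ∀ n < dm m, ‖(P m).coeff n‖ ≤ M) :
    ∃ (A : ℝ) (α : ℕ → ℂ) (Pt : ℕ → Polynomial ℂ) (M' : ℝ),
      1 ≤ A ∧ 0 ≤ M' ∧
      (∀ m, 1 / A ≤ ‖α m‖ ∧ ‖α m‖ ≤ A) ∧
      (∀ m, 1 ≤ m → ∀ z : ℂ,
        (Pt m).eval z = α m * (P m).eval (z / α (m - 1))) ∧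
      (∀ m, (Pt m).Monic) ∧
      (∀ m, (Pt m).natDegree = dm m) ∧
      (∀ m, ∀ n < dm m, ‖(Pt m).coeff n‖ ≤ M') := by
  obtain ⟨A, β, hA, hβ, hpow⟩ := exists_bounded_pow_eq_mul_succ hK hlead (fun m => (hdm m).1)
  have hA0 : 0 < A := one_pos.trans_le hA
  have hβ0 : ∀ m, β m ≠ 0 := fun m h => by
    have := (one_div_pos.2 hA0).trans_le (hβ m).1
    simp [h] at this
  have hβinv : ∀ m, ‖(β m)⁻¹‖ ≤ A := fun m => by
    rw [norm_inv]
    exact inv_le_of_inv_le₀ hA0 (by simpa using (hβ m).1)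
  -- `β m` plays the role of `α_{m-1}`, so that `Pt 0` is a genuine conjugate of `P 0` as well.
  refine ⟨A, fun m => β (m + 1), fun m => C (β (m + 1)) * (P m).comp (C (β m)⁻¹ * X),
    A ^ (d + 1) * M, hA, by positivity, fun m => hβ (m + 1), ?_, fun m => ?_, fun m => ?_,
    fun m n hn => ?_⟩
  · rintro m hm z
    obtain ⟨k, rfl⟩ := Nat.exists_eq_add_of_le' hm
    rw [eval_mul, eval_C, eval_comp, eval_mul, eval_C, eval_X, Nat.add_sub_cancel, div_eq_mul_inv,
      mul_comm z]
  · have hlead0 : (P m).leadingCoeff ≠ 0 := left_ne_zero_of_mul (hpow m ▸ pow_ne_zero _ (hβ0 m))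
    rw [Monic, leadingCoeff_C_mul_comp_C_mul_X _ (hβ0 _) (inv_ne_zero (hβ0 m)), hdeg, inv_pow,
      hpow]
    field_simp [hβ0 (m + 1)]
  · rw [natDegree_C_mul_comp_C_mul_X _ (hβ0 _) (inv_ne_zero (hβ0 m)), hdeg]
  · exact norm_coeff_C_mul_comp_C_mul_X_le hA hM (hβ (m + 1)).2 (hβinv m)
      (hn.le.trans (hdm m).2) (hcoeff m n hn)

/-- any bounded polynomial sequence is conjugate, via linear maps
`χ_m(z) = α_m z` with uniformly bounded coefficients, to a bounded monic sequence. -/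
theorem conjugate_to_monic (d : ℕ) (K M : ℝ) (hd : 2 ≤ d) (hK : 1 ≤ K) (hM : 0 ≤ M)
    (P : ℕ → Polynomial ℂ) (dm : ℕ → ℕ)
    (hdeg : ∀ m, (P m).natDegree = dm m)
    (hdm : ∀ m, 2 ≤ dm m ∧ dm m ≤ d)
    (hlead : ∀ m, 1 / K ≤ ‖(P m).leadingCoeff‖ ∧
      ‖(P m).leadingCoeff‖ ≤ K)
    (hcoeff : ∀ m, ∀ n < dm m, ‖(P m).coeff n‖ ≤ M) :
    ∃ (A : ℝ) (α : ℕ → ℂ) (Pt : ℕ → Polynomial ℂ) (M' : ℝ),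
      1 ≤ A ∧ 0 ≤ M' ∧
      (∀ m, 1 / A ≤ ‖α m‖ ∧ ‖α m‖ ≤ A) ∧
      (∀ m, 1 ≤ m → ∀ z : ℂ,
        (Pt m).eval z = α m * (P m).eval (z / α (m - 1))) ∧
      (∀ m, (Pt m).Monic) ∧
      (∀ m, (Pt m).natDegree = dm m) ∧
      (∀ m, ∀ n < dm m, ‖(Pt m).coeff n‖ ≤ M') :=
  conjugate_to_monic_general d K M hK hM P dm hdeg hdm hlead hcoeff
end

section
/- Let {P_m} be a bounded polynomial sequence with iterated Fatou sets F_m and iterated Julia sets J_m. Then for all 0 ≤ m ≤ n, Q_{m,n}(F_m) = F_n and Q_{m,n}(J_m) = J_n. -/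
/-!
A composition `Q m n` of non-constant polynomials is a non-constant polynomial, hence an open,
continuous and surjective self-map of `ℂ`. By the cocycle identity `Q n k ∘ Q m n = Q m k`,
the filled Julia set and the basin of infinity at time `m` are the preimages under `Q m n` of
those at time `n` (only finitely many iterates are lost). Preimages under an open continuous map
commute with interior and frontier, and by surjectivity `Q m n '' (Q m n ⁻¹' S) = S`.
-/

open Filter Polynomial Set

section Orbits

variable {α : Type*} [Norm α] (Q : ℕ → ℕ → α → α)

def boundedOrbitSet (m : ℕ) : Set α := {z | ∃ C : ℝ, ∀ n, m ≤ n → ‖Q m n z‖ ≤ C}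

def escapingSet (m : ℕ) : Set α := {z | Tendsto (fun n => ‖Q m n z‖) atTop atTop}

variable {Q} {m n : ℕ}

theorem boundedOrbitSet_eq_preimage (hmn : m ≤ n)
    (hQ : ∀ k, n ≤ k → ∀ z, Q n k (Q m n z) = Q m k z) :
    boundedOrbitSet Q m = Q m n ⁻¹' boundedOrbitSet Q n := by
  ext z
  constructor
  · rintro ⟨C, hC⟩
    exact ⟨C, fun k hk => hQ k hk z ▸ hC k (hmn.trans hk)⟩
  · rintro ⟨C, hC⟩
    let B := (Finset.range (n + 1)).sup' Finset.nonempty_range_add_one fun k => ‖Q m k z‖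
    refine ⟨max C B, fun k _ => ?_⟩
    rcases le_total k n with hkn | hnk
    · exact le_max_of_le_right <|
        Finset.le_sup' (fun k => ‖Q m k z‖) (Finset.mem_range_succ_iff.mpr hkn)
    · exact le_max_of_le_left <| hQ k hnk z ▸ hC k hnk

theorem escapingSet_eq_preimage (hQ : ∀ k, n ≤ k → ∀ z, Q n k (Q m n z) = Q m k z) :
    escapingSet Q m = Q m n ⁻¹' escapingSet Q n := by
  ext z
  exact tendsto_congr' <| eventually_atTop.mpr ⟨n, fun k hk => congrArg norm (hQ k hk z).symm⟩

end Orbits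

section Recursion

variable {α : Type*} {f : ℕ → α → α} {Q : ℕ → ℕ → α → α}

theorem comp_eq_of_recursion (hQ0 : ∀ m z, Q m m z = z)
    (hQs : ∀ m n z, Q m (n + 1) z = f (n + 1) (Q m n z)) (m : ℕ) {n k : ℕ} (hnk : n ≤ k)
    (z : α) : Q n k (Q m n z) = Q m k z := by
  induction k, hnk using Nat.le_induction with
  | base => rw [hQ0]
  | succ j _ ih => rw [hQs, hQs, ih]

theorem exists_polynomial_of_recursion {R : Type*} [CommSemiring R] [NoZeroDivisors R]
    [Nontrivial R]
    {P : ℕ → R[X]} {Q : ℕ → ℕ → R → R} (hP : ∀ k, (P k).natDegree ≠ 0)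
    (hQ0 : ∀ m z, Q m m z = z) (hQs : ∀ m n z, Q m (n + 1) z = (P (n + 1)).eval (Q m n z))
    {m n : ℕ} (hmn : m ≤ n) : ∃ p : R[X], p.natDegree ≠ 0 ∧ Q m n = p.eval := by
  induction n, hmn using Nat.le_induction with
  | base => exact ⟨X, by simp, funext fun z => by simp [hQ0]⟩
  | succ k _ ih =>
    obtain ⟨p, hp, hQp⟩ := ih
    refine ⟨(P (k + 1)).comp p, ?_, funext fun z => by rw [hQs, hQp, eval_comp]⟩
    rw [natDegree_comp]
    exact mul_ne_zero (hP (k + 1)) hp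

end Recursion

theorem fatou_julia_invariance_general (d : ℕ)
    (P : ℕ → Polynomial ℂ) (dm : ℕ → ℕ)
    (hdeg : ∀ m, (P m).natDegree = dm m)
    (hdm : ∀ m, 2 ≤ dm m ∧ dm m ≤ d)
    (Q : ℕ → ℕ → ℂ → ℂ)
    (hQ0 : ∀ m z, Q m m z = z)
    (hQs : ∀ m n z, Q m (n + 1) z = (P (n + 1)).eval (Q m n z))
    (A Kf J F : ℕ → Set ℂ)
    (hA : ∀ m, A m = {z : ℂ | Tendsto (fun n => ‖Q m n z‖) atTop atTop})
    (hKf : ∀ m, Kf m = {z : ℂ | ∃ C : ℝ, ∀ n, m ≤ n → ‖Q m n z‖ ≤ C})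
    (hJ : ∀ m, J m = frontier (Kf m))
    (hF : ∀ m, F m = interior (Kf m) ∪ A m)
    (m n : ℕ) (hmn : m ≤ n) :
    Q m n '' F m = F n ∧ Q m n '' J m = J n := by
  have hP : ∀ k, (P k).natDegree ≠ 0 := fun k => by rw [hdeg]; have := (hdm k).1; omega
  obtain ⟨p, hp, hQp⟩ := exists_polynomial_of_recursion hP hQ0 hQs hmn
  have hQmn : IsOpenQuotientMap (Q m n) := hQp ▸ p.isOpenQuotientMap_eval hp
  have hcomp := fun k (hk : n ≤ k) =>
    comp_eq_of_recursion (f := fun k z => (P k).eval z) hQ0 hQs m hk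
  have hKpre : Kf m = Q m n ⁻¹' Kf n := by
    rw [hKf m, hKf n]
    exact boundedOrbitSet_eq_preimage hmn hcomp
  have hApre : A m = Q m n ⁻¹' A n := by
    rw [hA m, hA n]
    exact escapingSet_eq_preimage hcomp
  constructor
  · rw [hF m, hF n, hKpre, hApre,
      ← hQmn.isOpenMap.preimage_interior_eq_interior_preimage hQmn.continuous,
      ← preimage_union, image_preimage_eq _ hQmn.surjective]
  · rw [hJ m, hJ n, hKpre,
      ← hQmn.isOpenMap.preimage_frontier_eq_frontier_preimage hQmn.continuous,
      image_preimage_eq _ hQmn.surjective]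

/-- invariance of the iterated Fatou and Julia sets:
`Q_{m,n}(F_m) = F_n` and `Q_{m,n}(J_m) = J_n`. -/
theorem fatou_julia_invariance (d : ℕ) (K M : ℝ) (hd : 2 ≤ d) (hK : 1 ≤ K) (hM : 0 ≤ M)
    (P : ℕ → Polynomial ℂ) (dm : ℕ → ℕ)
    (hdeg : ∀ m, (P m).natDegree = dm m)
    (hdm : ∀ m, 2 ≤ dm m ∧ dm m ≤ d)
    (hlead : ∀ m, 1 / K ≤ ‖(P m).leadingCoeff‖ ∧
      ‖(P m).leadingCoeff‖ ≤ K)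
    (hcoeff : ∀ m, ∀ n < dm m, ‖(P m).coeff n‖ ≤ M)
    (Q : ℕ → ℕ → ℂ → ℂ)
    (hQ0 : ∀ m z, Q m m z = z)
    (hQs : ∀ m n z, Q m (n + 1) z = (P (n + 1)).eval (Q m n z))
    (A Kf J F : ℕ → Set ℂ)
    (hA : ∀ m, A m = {z : ℂ | Tendsto (fun n => ‖Q m n z‖) atTop atTop})
    (hKf : ∀ m, Kf m = {z : ℂ | ∃ C : ℝ, ∀ n, m ≤ n → ‖Q m n z‖ ≤ C})
    (hJ : ∀ m, J m = frontier (Kf m))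
    (hF : ∀ m, F m = interior (Kf m) ∪ A m)
    (m n : ℕ) (hmn : m ≤ n) :
    Q m n '' F m = F n ∧ Q m n '' J m = J n :=
  fatou_julia_invariance_general d P dm hdeg hdm Q hQ0 hQs A Kf J F hA hKf hJ hF m n hmn
end
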